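/- Heavy-ball method, non-ergodic rate: let f : ℝ^n → ℝ be convex, coercive, and differentiable with ∇f Lipschitz continuous with constant L > 0, with argmin f nonempty. Fix β ∈ (0,1), c ∈ (0,1), and γ = 2(1−β)c/L, and given x^{−1}, x^0 generate x^{k+1} = x^k − γ∇f(x^k) + β(x^k − x^{k−1}). Then there exists C > 0 such that f(x^k) − min f ≤ C/k for all k ≥ 1. -/

import Mathlib

/-!
Two Lyapunov functions drive the argument. By the descent lemma the energy
`2γ (f xᵏ - min f) + β ‖xᵏ - xᵏ⁻¹‖²` decreases by at least `(2 - 2β - γL) ‖xᵏ⁺¹ - xᵏ‖²`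
per step, so it is nonincreasing and the velocities are square-summable. The shifted point
`zᵏ = xᵏ + s (xᵏ - xᵏ⁻¹)`, `s = β / (1 - β)`, performs plain gradient steps
`zᵏ⁺¹ = zᵏ - η ∇f(xᵏ)` with `η = γ / (1 - β)`; cocoercivity of `∇f` then makes
`‖zᵏ - x*‖² + 2ηs (f xᵏ⁻¹ - min f)` decrease by a fixed multiple of `f xᵏ - min f`, so the
gaps are summable. A nonincreasing summable sequence is `O(1/k)`.
-/

open RealInnerProductSpace Finset

lemma sum_range_le_of_add_le {G a : ℕ → ℝ} (hstep : ∀ k, G (k + 1) + a k ≤ G k)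
    (hG : ∀ k, 0 ≤ G k) (k : ℕ) : ∑ j ∈ range k, a j ≤ G 0 := by
  suffices h : G k + ∑ j ∈ range k, a j ≤ G 0 by linarith [hG k]
  induction k with
  | zero => simp
  | succ k ih => rw [sum_range_succ]; linarith [hstep k]

lemma Antitone.nat_mul_le_sum_range {F : ℕ → ℝ} (hF : Antitone F) (k : ℕ) :
    k * F k ≤ ∑ j ∈ range k, F (j + 1) := by
  calc k * F k = ∑ _j ∈ range k, F k := by simp
    _ ≤ ∑ j ∈ range k, F (j + 1) :=
      sum_le_sum fun j hj => hF (Nat.succ_le_of_lt (mem_range.mp hj))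

lemma nat_mul_le_of_lyapunov {D V G : ℕ → ℝ} {p q a ε : ℝ} (hp : 0 ≤ p) (hq : 0 ≤ q) (ha : 0 < a)
    (hε : 0 < ε) (hD : ∀ k, 0 ≤ D k) (hV : ∀ k, 0 ≤ V k) (hG : ∀ k, 0 ≤ G k)
    (henergy : ∀ k, p * D (k + 1) + q * V (k + 1) + ε * V (k + 1) ≤ p * D k + q * V k)
    (hdist : ∀ k, G (k + 1) + a * D k ≤ G k) (k : ℕ) :
    k * (p * D k + q * V k) ≤ p * (G 0 / a) + q * ((p * D 0 + q * V 0) / ε) := by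
  set F : ℕ → ℝ := fun k => p * D k + q * V k
  have hF : ∀ k, 0 ≤ F k := fun k => by have := hD k; have := hV k; positivity
  have hanti : Antitone F := antitone_nat_of_succ_le fun k => by
    linarith [henergy k, mul_nonneg hε.le (hV (k + 1))]
  have hsumD : ∑ j ∈ range k, D (j + 1) ≤ G 0 / a := by
    have := sum_range_le_of_add_le hdist hG (k + 1)
    rw [sum_range_succ', ← mul_sum] at this
    rw [le_div_iff₀ ha]
    linarith [mul_nonneg ha.le (hD 0)]
  have hsumV : ∑ j ∈ range k, V (j + 1) ≤ F 0 / ε := by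
    have := sum_range_le_of_add_le (a := fun j => ε * V (j + 1)) henergy hF k
    rw [← mul_sum] at this
    rw [le_div_iff₀ hε]
    linarith
  calc k * F k ≤ ∑ j ∈ range k, F (j + 1) := hanti.nat_mul_le_sum_range k
    _ = p * ∑ j ∈ range k, D (j + 1) + q * ∑ j ∈ range k, V (j + 1) := by
      simp only [F, sum_add_distrib, mul_sum]
    _ ≤ p * (G 0 / a) + q * (F 0 / ε) := by gcongr

/-- The choice `(1 + s) β = s` is what cancels the momentum term. -/
lemma heavyBall_shadow_eq {E : Type*} [AddCommGroup E] [Module ℝ E] {β γ s : ℝ}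
    {xprev x xnext g : E} (hs : (1 + s) * β = s) (hstep : xnext = x - γ • g + β • (x - xprev)) :
    xnext + s • (xnext - x) = x + s • (x - xprev) - ((1 + s) * γ) • g := by
  subst hstep
  linear_combination (norm := module) hs • (x - xprev)

section HeavyBall

variable {E : Type*} [NormedAddCommGroup E] [InnerProductSpace ℝ E] [CompleteSpace E]
  {f : E → ℝ} {f' : E → E} {L : ℝ}

lemma HasGradientAt.hasDerivAt_comp_lineMap {g x y : E} {t : ℝ}
    (hf : HasGradientAt f g (AffineMap.lineMap x y t)) :
    HasDerivAt (fun s : ℝ => f (AffineMap.lineMap x y s)) ⟪g, y - x⟫ t := by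
  simpa [Function.comp_def] using hf.hasFDerivAt.comp_hasDerivAt t AffineMap.hasDerivAt_lineMap

lemma ConvexOn.add_inner_le_of_hasGradientAt (hconv : ConvexOn ℝ Set.univ f) {g x : E}
    (hf : HasGradientAt f g x) (y : E) : f x + ⟪g, y - x⟫ ≤ f y := by
  have hline : ConvexOn ℝ Set.univ (fun t : ℝ => f (AffineMap.lineMap x y t)) := by
    simpa [Function.comp_def] using hconv.comp_affineMap (AffineMap.lineMap x y)
  have hderiv : HasDerivAt (fun t : ℝ => f (AffineMap.lineMap x y t)) ⟪g, y - x⟫ 0 :=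
    HasGradientAt.hasDerivAt_comp_lineMap (by simpa using hf)
  have := hline.le_slope_of_hasDerivAt (Set.mem_univ 0) (Set.mem_univ 1) one_pos hderiv
  simp only [slope_def_field, AffineMap.lineMap_apply_one, AffineMap.lineMap_apply_zero, sub_zero,
    div_one] at this
  linarith

lemma HasGradientAt.eq_zero_of_forall_le {g x : E} (hf : HasGradientAt f g x)
    (hmin : ∀ y, f x ≤ f y) : g = 0 := by
  have hloc : IsLocalMin f x := Filter.Eventually.of_forall hmin
  have := hloc.hasFDerivAt_eq_zero hf.hasFDerivAt
  exact (InnerProductSpace.toDual ℝ E).map_eq_zero_iff.mp this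

lemma le_add_inner_add_sq_of_lipschitz_gradient (hf : ∀ p, HasGradientAt f (f' p) p)
    (hlip : ∀ p q, ‖f' p - f' q‖ ≤ L * ‖p - q‖) (x y : E) :
    f y ≤ f x + ⟪f' x, y - x⟫ + L / 2 * ‖y - x‖ ^ 2 := by
  set φ : ℝ → ℝ := fun t =>
    f (AffineMap.lineMap x y t) - t * ⟪f' x, y - x⟫ - L / 2 * t ^ 2 * ‖y - x‖ ^ 2
  have hφ : ∀ t, HasDerivAt φ
      (⟪f' (AffineMap.lineMap x y t) - f' x, y - x⟫ - L * t * ‖y - x‖ ^ 2) t := by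
    intro t
    have := (((hf _).hasDerivAt_comp_lineMap (x := x) (y := y)).sub
      ((hasDerivAt_id t).mul_const ⟪f' x, y - x⟫)).sub
        (((hasDerivAt_pow 2 t).const_mul (L / 2)).mul_const (‖y - x‖ ^ 2))
    refine this.congr_deriv ?_
    rw [inner_sub_left]
    push_cast
    ring
  have hφ' : ∀ t ∈ interior (Set.Ici (0 : ℝ)),
      ⟪f' (AffineMap.lineMap x y t) - f' x, y - x⟫ - L * t * ‖y - x‖ ^ 2 ≤ 0 := by
    intro t ht
    rw [interior_Ici] at ht
    rw [sub_nonpos]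
    have hdist : ‖AffineMap.lineMap x y t - x‖ = t * ‖y - x‖ := by
      rw [AffineMap.lineMap_apply_module', add_sub_cancel_right, norm_smul,
        Real.norm_of_nonneg ht.le]
    calc ⟪f' (AffineMap.lineMap x y t) - f' x, y - x⟫
        ≤ ‖f' (AffineMap.lineMap x y t) - f' x‖ * ‖y - x‖ := real_inner_le_norm _ _
      _ ≤ L * (t * ‖y - x‖) * ‖y - x‖ := by
        rw [← hdist]; exact mul_le_mul_of_nonneg_right (hlip _ _) (norm_nonneg _)
      _ = L * t * ‖y - x‖ ^ 2 := by ring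
  have hanti := antitoneOn_of_hasDerivWithinAt_nonpos (convex_Ici 0)
    (fun t _ => (hφ t).continuousAt.continuousWithinAt) (fun t _ => (hφ t).hasDerivWithinAt) hφ'
  have := hanti (Set.self_mem_Ici) (Set.mem_Ici.mpr zero_le_one) zero_le_one
  simp only [φ, AffineMap.lineMap_apply_one, AffineMap.lineMap_apply_zero, one_mul, one_pow,
    mul_one, zero_mul, mul_zero, sub_zero, ne_eq, OfNat.ofNat_ne_zero, not_false_eq_true, zero_pow,
    tsub_le_iff_right] at this
  linarith

lemma add_sq_norm_gradient_div_le_of_forall_le (hf : ∀ p, HasGradientAt f (f' p) p)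
    (hlip : ∀ p q, ‖f' p - f' q‖ ≤ L * ‖p - q‖) (hL : 0 < L) {xstar : E}
    (hmin : ∀ y, f xstar ≤ f y) (x : E) :
    f xstar + ‖f' x‖ ^ 2 / (2 * L) ≤ f x := by
  have hdesc := le_add_inner_add_sq_of_lipschitz_gradient hf hlip x (x - L⁻¹ • f' x)
  rw [sub_sub_cancel_left, inner_neg_right, norm_neg, inner_smul_right, real_inner_self_eq_norm_sq,
    norm_smul, Real.norm_of_nonneg (inv_nonneg.2 hL.le)] at hdesc
  have hval : L⁻¹ * ‖f' x‖ ^ 2 - L / 2 * (L⁻¹ * ‖f' x‖) ^ 2 = ‖f' x‖ ^ 2 / (2 * L) := by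
    field_simp
    ring
  linarith [hmin (x - L⁻¹ • f' x)]

lemma add_inner_add_sq_norm_sub_div_le (hconv : ConvexOn ℝ Set.univ f)
    (hf : ∀ p, HasGradientAt f (f' p) p) (hlip : ∀ p q, ‖f' p - f' q‖ ≤ L * ‖p - q‖) (hL : 0 < L)
    (x y : E) :
    f x + ⟪f' x, y - x⟫ + ‖f' y - f' x‖ ^ 2 / (2 * L) ≤ f y := by
  set φ : E → ℝ := fun z => f z - ⟪f' x, z⟫
  have hφ : ∀ p, HasGradientAt φ (f' p - f' x) p := by
    intro p
    rw [hasGradientAt_iff_hasFDerivAt, map_sub]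
    exact (hf p).hasFDerivAt.sub (InnerProductSpace.toDual ℝ E (f' x)).hasFDerivAt
  have hφconv : ConvexOn ℝ Set.univ φ :=
    hconv.sub ((innerₛₗ ℝ (f' x)).concaveOn convex_univ)
  have hφmin : ∀ z, φ x ≤ φ z := by
    intro z
    simpa using hφconv.add_inner_le_of_hasGradientAt (hφ x) z
  have := add_sq_norm_gradient_div_le_of_forall_le hφ (fun p q => by simpa using hlip p q) hL
    hφmin y
  simp only [φ, inner_sub_right] at this ⊢
  linarith

/-- For `ηL ≤ 1` the term `η² ‖∇f x‖²` is absorbed by cocoercivity; beyond that, the excess is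
paid for with `‖∇f x‖² ≤ 2L (f x - min f)`. -/
lemma two_mul_min_mul_sub_add_sq_le_inner (hconv : ConvexOn ℝ Set.univ f)
    (hf : ∀ p, HasGradientAt f (f' p) p) (hlip : ∀ p q, ‖f' p - f' q‖ ≤ L * ‖p - q‖) (hL : 0 < L)
    {xstar : E} (hmin : ∀ y, f xstar ≤ f y) {η : ℝ} (hη : 0 ≤ η) (x : E) :
    2 * η * min 1 (2 - η * L) * (f x - f xstar) + η ^ 2 * ‖f' x‖ ^ 2
      ≤ 2 * η * ⟪f' x, x - xstar⟫ := by
  have hcoco := add_inner_add_sq_norm_sub_div_le hconv hf hlip hL x xstar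
  rw [(hf xstar).eq_zero_of_forall_le hmin, zero_sub, norm_neg, ← neg_sub x xstar,
    inner_neg_right] at hcoco
  have hsq := add_sq_norm_gradient_div_le_of_forall_le hf hlip hL hmin x
  set q := ‖f' x‖ ^ 2 / (2 * L)
  have hq : 0 ≤ q := by positivity
  have hgap : 0 ≤ f x - f xstar := sub_nonneg.2 (hmin x)
  have hkey : min 1 (2 - η * L) * (f x - f xstar) + η * L * q ≤ f x - f xstar + q := by
    rcases le_total (η * L) 1 with h | h
    · nlinarith [min_le_left 1 (2 - η * L)]
    · nlinarith [min_le_right 1 (2 - η * L)]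
  calc 2 * η * min 1 (2 - η * L) * (f x - f xstar) + η ^ 2 * ‖f' x‖ ^ 2
      = 2 * η * (min 1 (2 - η * L) * (f x - f xstar) + η * L * q) := by
        simp only [q]; field_simp
    _ ≤ 2 * η * (f x - f xstar + q) := by gcongr
    _ ≤ 2 * η * ⟪f' x, x - xstar⟫ := by gcongr; linarith

lemma heavyBall_energy_le {β γ : ℝ} {xprev x xnext : E} (hf : ∀ p, HasGradientAt f (f' p) p)
    (hlip : ∀ p q, ‖f' p - f' q‖ ≤ L * ‖p - q‖) (hβ : 0 ≤ β) (hγ : 0 ≤ γ)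
    (hstep : xnext = x - γ • f' x + β • (x - xprev)) :
    2 * γ * f xnext + (2 - β - γ * L) * ‖xnext - x‖ ^ 2
      ≤ 2 * γ * f x + β * ‖x - xprev‖ ^ 2 := by
  have hdesc := mul_le_mul_of_nonneg_left
    (le_add_inner_add_sq_of_lipschitz_gradient hf hlip x xnext) (by positivity : 0 ≤ 2 * γ)
  have hinner : γ * ⟪f' x, xnext - x⟫ = β * ⟪x - xprev, xnext - x⟫ - ‖xnext - x‖ ^ 2 := by
    have hgrad : γ • f' x = β • (x - xprev) - (xnext - x) := by rw [hstep]; abel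
    rw [← real_inner_smul_left, hgrad, inner_sub_left, real_inner_smul_left,
      real_inner_self_eq_norm_sq]
  have hpolar : 2 * ⟪x - xprev, xnext - x⟫ ≤ ‖x - xprev‖ ^ 2 + ‖xnext - x‖ ^ 2 := by
    linarith [norm_sub_sq_real (x - xprev) (xnext - x), sq_nonneg ‖x - xprev - (xnext - x)‖]
  linarith [mul_le_mul_of_nonneg_left hpolar hβ]

lemma heavyBall_shadow_dist_le (hconv : ConvexOn ℝ Set.univ f)
    (hf : ∀ p, HasGradientAt f (f' p) p) (hlip : ∀ p q, ‖f' p - f' q‖ ≤ L * ‖p - q‖) (hL : 0 < L)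
    {xstar : E} (hmin : ∀ y, f xstar ≤ f y) {η s : ℝ} (hη : 0 ≤ η) (hs : 0 ≤ s) (xprev x : E) :
    ‖x + s • (x - xprev) - η • f' x - xstar‖ ^ 2
        + 2 * η * (s + min 1 (2 - η * L)) * (f x - f xstar)
      ≤ ‖x + s • (x - xprev) - xstar‖ ^ 2 + 2 * η * s * (f xprev - f xstar) := by
  have hexpand : ‖x + s • (x - xprev) - η • f' x - xstar‖ ^ 2
      = ‖x + s • (x - xprev) - xstar‖ ^ 2
        - 2 * η * (⟪f' x, x - xstar⟫ + s * ⟪f' x, x - xprev⟫) + η ^ 2 * ‖f' x‖ ^ 2 := by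
    rw [show x + s • (x - xprev) - η • f' x - xstar = x + s • (x - xprev) - xstar - η • f' x by
        abel,
      norm_sub_sq_real, real_inner_smul_right, norm_smul, Real.norm_of_nonneg hη, mul_pow,
      real_inner_comm, show x + s • (x - xprev) - xstar = (x - xstar) + s • (x - xprev) by abel,
      inner_add_right, real_inner_smul_right]
    ring
  have hbound := two_mul_min_mul_sub_add_sq_le_inner hconv hf hlip hL hmin hη x
  have hfirst := hconv.add_inner_le_of_hasGradientAt (hf x) xprev
  rw [← neg_sub x xprev, inner_neg_right] at hfirst
  have := mul_le_mul_of_nonneg_left hfirst (by positivity : 0 ≤ 2 * η * s)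
  linarith

lemma heavyBall_exists_nat_mul_lyapunov_le (hconv : ConvexOn ℝ Set.univ f)
    (hf : ∀ p, HasGradientAt f (f' p) p) (hlip : ∀ p q, ‖f' p - f' q‖ ≤ L * ‖p - q‖) (hL : 0 < L)
    {xstar : E} (hmin : ∀ y, f xstar ≤ f y) {β γ : ℝ} (hβ0 : 0 ≤ β) (hβ1 : β < 1) (hγ : 0 < γ)
    (hγL : γ * L < 2 * (1 - β)) {x : ℤ → E}
    (hiter : ∀ k : ℕ, x (k + 1) = x k - γ • f' (x k) + β • (x k - x ((k : ℤ) - 1))) :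
    ∃ T, ∀ k : ℕ, k * (2 * γ * (f (x k) - f xstar) + β * ‖x k - x (k - 1)‖ ^ 2) ≤ T := by
  have hβ' : 0 < 1 - β := sub_pos.2 hβ1
  set s := β / (1 - β)
  have hs : (1 + s) * β = s := by simp only [s]; field_simp; ring
  have hs0 : 0 ≤ s := by positivity
  set η := (1 + s) * γ
  have hηL : η * L < 2 := by
    have : η * L = γ * L / (1 - β) := by simp only [η, s]; field_simp; ring
    rw [this, div_lt_iff₀ hβ']
    linarith
  set D : ℤ → ℝ := fun k => f (x k) - f xstar
  set V : ℤ → ℝ := fun k => ‖x k - x (k - 1)‖ ^ 2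
  set z : ℤ → E := fun k => x k + s • (x k - x (k - 1))
  have hmin_pos : 0 < min 1 (2 - η * L) := lt_min one_pos (by linarith)
  exact ⟨_, nat_mul_le_of_lyapunov (D := fun k : ℕ => D k) (V := fun k : ℕ => V k)
    (G := fun k : ℕ => ‖z k - xstar‖ ^ 2 + 2 * η * s * D (k - 1))
    (p := 2 * γ) (q := β) (a := 2 * η * min 1 (2 - η * L)) (ε := 2 - 2 * β - γ * L)
    (by positivity) hβ0 (by positivity) (by linarith)
    (fun k => sub_nonneg.2 (hmin _)) (fun k => sq_nonneg _)
    (fun k => by have := sub_nonneg.2 (hmin (x (k - 1))); positivity)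
    (fun k => by
      have := heavyBall_energy_le hf hlip hβ0 hγ.le (hiter k)
      simp only [D, V, Nat.cast_succ, add_sub_cancel_right]
      linarith)
    (fun k => by
      have := heavyBall_shadow_dist_le hconv hf hlip hL hmin (η := η) (by positivity) hs0
        (x (k - 1)) (x k)
      rw [← heavyBall_shadow_eq hs (hiter k)] at this
      simp only [D, z, Nat.cast_succ, add_sub_cancel_right]
      linarith)⟩

end HeavyBall

theorem pigd_stmt7_general
    {n : ℕ} (f : EuclideanSpace ℝ (Fin n) → ℝ)
    (f' : EuclideanSpace ℝ (Fin n) → EuclideanSpace ℝ (Fin n))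
    (L c β γ : ℝ) (hL : 0 < L) (hc0 : 0 < c) (hc1 : c < 1)
    (hβ0 : 0 < β) (hβ1 : β < 1) (hγ : γ = 2 * (1 - β) * c / L)
    (hfconv : ConvexOn ℝ Set.univ f)
    (hf' : ∀ x, HasGradientAt f (f' x) x)
    (hlip : ∀ x y, ‖f' x - f' y‖ ≤ L * ‖x - y‖)
    -- `argmin f` is nonempty and `f xstar = min f`
    (xstar : EuclideanSpace ℝ (Fin n)) (hxstar : ∀ y, f xstar ≤ f y)
    (x : ℤ → EuclideanSpace ℝ (Fin n))
    (hiter : ∀ k : ℕ,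
      x (k + 1) = x k - γ • f' (x k) + β • (x k - x ((k : ℤ) - 1))) :
    ∃ C : ℝ, 0 < C ∧ ∀ k : ℕ, 1 ≤ k → f (x k) - f xstar ≤ C / k := by
  have hβ' : 0 < 1 - β := sub_pos.2 hβ1
  have hγ0 : 0 < γ := by rw [hγ]; positivity
  have hγL : γ * L < 2 * (1 - β) := by
    rw [hγ, div_mul_cancel₀ _ hL.ne']
    nlinarith
  obtain ⟨T, hT⟩ := heavyBall_exists_nat_mul_lyapunov_le hfconv hf' hlip hL hxstar hβ0.le hβ1 hγ0
    hγL hiter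
  have hT0 : 0 ≤ T := by simpa using hT 0
  refine ⟨T / (2 * γ) + 1, by positivity, fun k hk => ?_⟩
  have hk0 : (0 : ℝ) < k := by exact_mod_cast hk
  have hkD : (f (x k) - f xstar) * k ≤ T / (2 * γ) := by
    rw [le_div_iff₀' (by positivity)]
    linarith [hT k, mul_nonneg hk0.le (mul_nonneg hβ0.le (sq_nonneg ‖x k - x (k - 1)‖))]
  rw [le_div_iff₀ hk0]
  linarith

/-- non-ergodic `O(1/k)` rate for the heavy-ball method. Let `f` be
convex, coercive, differentiable with `L`-Lipschitz gradient, `argmin f ≠ ∅`. For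
`β ∈ (0,1)`, `c ∈ (0,1)`, `γ = 2(1−β)c/L` and iterates
`xᵏ⁺¹ = xᵏ − γ∇f(xᵏ) + β(xᵏ − xᵏ⁻¹)`, we have `f(xᵏ) − min f ≤ C/k` for all `k ≥ 1`. -/
theorem pigd_stmt7
    {n : ℕ} (f : EuclideanSpace ℝ (Fin n) → ℝ)
    (f' : EuclideanSpace ℝ (Fin n) → EuclideanSpace ℝ (Fin n))
    (L c β γ : ℝ) (hL : 0 < L) (hc0 : 0 < c) (hc1 : c < 1)
    (hβ0 : 0 < β) (hβ1 : β < 1) (hγ : γ = 2 * (1 - β) * c / L)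
    (hfconv : ConvexOn ℝ Set.univ f)
    (hf' : ∀ x, HasGradientAt f (f' x) x)
    (hlip : ∀ x y, ‖f' x - f' y‖ ≤ L * ‖x - y‖)
    -- `f` is coercive
    (hcoer : Filter.Tendsto f (Filter.comap norm Filter.atTop) Filter.atTop)
    -- `argmin f` is nonempty and `f xstar = min f`
    (xstar : EuclideanSpace ℝ (Fin n)) (hxstar : ∀ y, f xstar ≤ f y)
    (x : ℤ → EuclideanSpace ℝ (Fin n))
    (hiter : ∀ k : ℕ,
      x (k + 1) = x k - γ • f' (x k) + β • (x k - x ((k : ℤ) - 1))) :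
    ∃ C : ℝ, 0 < C ∧ ∀ k : ℕ, 1 ≤ k → f (x k) - f xstar ≤ C / k :=
  pigd_stmt7_general f f' L c β γ hL hc0 hc1 hβ0 hβ1 hγ hfconv hf' hlip xstar hxstar x hiter
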